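/- Theorem 3: Assume (A1)–(A3), (A5) and the MSM. Then θ_sw^(m) − θ_rsw^(m) = Σ_{j=m+1}^{K} ψ_j q_j. -/

import Mathlib

/-!
On the event `Ā = c` each weight is a constant times `∏_{k ≥ s} 1/π_k`, where `π_k` is the
propensity of the observed treatment at time `k` (`s = 0` for `W_sw`, `s = K − m` for `W_rsw`);
by the chain rule the constant is `P(Ā = c)` for `W_sw` and `P(A̲(K−m) = a_m)` for `W_rsw`.
Removing the factors one at a time, last one first, (A2) and (A3) turn
`∫_{Ā = c} (∏_{k ≥ s} 1/π_k) Y` into `∫_{Ā(s−1) = c} Y^c` (the g-formula). Hence on the arm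
`A̲(K−m) = a_m` the `W_sw`-weighted mean of `Y` is the MSM averaged over the observed treatments,
`ψ₀ + Σ_j ψ_j P(A(K−j) = 1 | A̲(K−m) = a_m)`, so that `θ_sw = Σ_j ψ_j q_j`; while the
`W_rsw`-weighted mean is `𝔼[Y^{a_m}]`, so that by (A5) and the MSM `θ_rsw = Σ_{j ≤ m} ψ_j`.
Since `q_j = 1` for `j ≤ m`, the two differ by `Σ_{j > m} ψ_j q_j`.
-/

open MeasureTheory Finset
open scoped Classical

namespace MSMPaper

noncomputable section

variable {Ω : Type*} [MeasurableSpace Ω] {𝓛 : Type*}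

/-- Conditional probability `P(E | F) = P(E ∩ F) / P(F)` as a real number
(junk value `0` when `P F = 0`). -/
def cP (P : Measure Ω) (E F : Set Ω) : ℝ := (P (E ∩ F)).toReal / (P F).toReal

variable {K : ℕ}

/-- Event `Ā(t−1) = b̄` (treatment history up to, not including, time `t`). -/
def Apast (A : Fin K → Ω → Bool) (t : ℕ) (b : Fin K → Bool) : Set Ω :=
  {ω | ∀ k : Fin K, (k : ℕ) < t → A k ω = b k}

/-- Event `L̄(t) = l̄` (covariate history up to and including time `t`). -/
def Lpast (L : Fin K → Ω → 𝓛) (t : ℕ) (l : Fin K → 𝓛) : Set Ω :=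
  {ω | ∀ k : Fin K, (k : ℕ) ≤ t → L k ω = l k}

/-- Event `A̲(s, t−1) = b` (treatment history from time `s` up to, not including, `t`). -/
def Aseg (A : Fin K → Ω → Bool) (s t : ℕ) (b : Fin K → Bool) : Set Ω :=
  {ω | ∀ k : Fin K, s ≤ (k : ℕ) → (k : ℕ) < t → A k ω = b k}

/-- Event `A̲(K−m) = a̲` for a (last-`m`) treatment vector `as`. -/
def EtrV (A : Fin K → Ω → Bool) (m : ℕ) (as : Fin K → Bool) : Set Ω :=
  {ω | ∀ k : Fin K, K - m ≤ (k : ℕ) → A k ω = as k}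

/-- Event `A̲(K−m) = a_m` (constant `a` on the last `m` coordinates). -/
def Etr (A : Fin K → Ω → Bool) (m : ℕ) (a : Bool) : Set Ω :=
  EtrV A m (fun _ => a)

/-- Stabilized weights `W_sw`. -/
def Wsw (P : Measure Ω) (A : Fin K → Ω → Bool) (L : Fin K → Ω → 𝓛) : Ω → ℝ :=
  fun ω => ∏ k : Fin K,
    cP P {ω' | A k ω' = A k ω} (Apast A (k : ℕ) (fun j => A j ω)) /
      cP P {ω' | A k ω' = A k ω}
        (Lpast L (k : ℕ) (fun j => L j ω) ∩ Apast A (k : ℕ) (fun j => A j ω))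

/-- Restricted stabilized weights `W_rsw^(m)`. -/
def Wrsw (P : Measure Ω) (A : Fin K → Ω → Bool) (L : Fin K → Ω → 𝓛) (m : ℕ) : Ω → ℝ :=
  fun ω => ∏ k ∈ Finset.univ.filter (fun k : Fin K => K - m ≤ (k : ℕ)),
    cP P {ω' | A k ω' = A k ω} (Aseg A (K - m) (k : ℕ) (fun j => A j ω)) /
      cP P {ω' | A k ω' = A k ω}
        (Lpast L (k : ℕ) (fun j => L j ω) ∩ Apast A (k : ℕ) (fun j => A j ω))

/-- Partial stabilized weights `W_psw^(m)`. -/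
def Wpsw (P : Measure Ω) (A : Fin K → Ω → Bool) (L : Fin K → Ω → 𝓛) (m : ℕ) : Ω → ℝ :=
  fun ω => ∏ k ∈ Finset.univ.filter (fun k : Fin K => K - m ≤ (k : ℕ)),
    cP P {ω' | A k ω' = A k ω} (Apast A (k : ℕ) (fun j => A j ω)) /
      cP P {ω' | A k ω' = A k ω}
        (Lpast L (k : ℕ) (fun j => L j ω) ∩ Apast A (k : ℕ) (fun j => A j ω))

/-- IP-weighted contrast `θ_W^(m)`. -/
def θW (P : Measure Ω) (A : Fin K → Ω → Bool) (m : ℕ) (W Y : Ω → ℝ) : ℝ :=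
  (∫ ω in Etr A m true, W ω * Y ω ∂P) / (∫ ω in Etr A m true, W ω ∂P) -
    (∫ ω in Etr A m false, W ω * Y ω ∂P) / (∫ ω in Etr A m false, W ω ∂P)

/-- `rev j` is the time index `K − 1 − j`; the paper's coefficient `ψ_{j+1}`
multiplies `a(K − (j+1)) = a(rev j)`. -/
def rev (j : Fin K) : Fin K := ⟨K - 1 - (j : ℕ), by have := j.isLt; omega⟩

/-- `θ^(K) = 𝔼[Y^{1_K}] − 𝔼[Y^{0_K}]`. -/
def θKfull (P : Measure Ω) (Ypot : (Fin K → Bool) → Ω → ℝ) : ℝ :=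
  (∫ ω, Ypot (fun _ => true) ω ∂P) - ∫ ω, Ypot (fun _ => false) ω ∂P

/-- (A1) consistency. -/
def A1ok (A : Fin K → Ω → Bool) (Y : Ω → ℝ) (Ypot : (Fin K → Bool) → Ω → ℝ) : Prop :=
  ∀ (a : Fin K → Bool) (ω : Ω), (∀ k, A k ω = a k) → Y ω = Ypot a ω

/-- (A2) sequential exchangeability. -/
def A2ok (P : Measure Ω) (A : Fin K → Ω → Bool) (L : Fin K → Ω → 𝓛)
    (Ypot : (Fin K → Bool) → Ω → ℝ) : Prop :=
  ∀ (t : Fin K) (a : Fin K → Bool) (B : Set ℝ), MeasurableSet B →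
    ∀ (av : Bool) (l : Fin K → 𝓛) (b : Fin K → Bool),
      0 < P (Lpast L (t : ℕ) l ∩ Apast A (t : ℕ) b) →
      cP P ({ω | Ypot a ω ∈ B} ∩ {ω | A t ω = av}) (Lpast L (t : ℕ) l ∩ Apast A (t : ℕ) b) =
        cP P {ω | Ypot a ω ∈ B} (Lpast L (t : ℕ) l ∩ Apast A (t : ℕ) b) *
          cP P {ω | A t ω = av} (Lpast L (t : ℕ) l ∩ Apast A (t : ℕ) b)

/-- (A3) positivity. -/
def A3ok (P : Measure Ω) (A : Fin K → Ω → Bool) (L : Fin K → Ω → 𝓛) : Prop :=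
  ∀ (t : Fin K) (av : Bool) (l : Fin K → 𝓛) (b : Fin K → Bool),
    0 < P (Lpast L (t : ℕ) l ∩ Apast A (t : ℕ) b) →
    0 < cP P {ω | A t ω = av} (Lpast L (t : ℕ) l ∩ Apast A (t : ℕ) b)

/-- The marginal structural model `𝔼[Y^{ā}] = ψ₀ + Σ_{j=1}^K ψ_j a(K−j)`;
here `ψ j` is the paper's `ψ_{j+1}`, the coefficient of `a(K−1−j)`. -/
def MSMeq (P : Measure Ω) (Ypot : (Fin K → Bool) → Ω → ℝ) (ψ0 : ℝ) (ψ : Fin K → ℝ) : Prop :=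
  ∀ a : Fin K → Bool,
    (∫ ω, Ypot a ω ∂P) = ψ0 + ∑ j : Fin K, ψ j * (if a (rev j) = true then 1 else 0)

/-- (A5) conditional MSM given the past treatment history `Ā(K−m−1)`. -/
def A5ok (P : Measure Ω) (A : Fin K → Ω → Bool) (Ypot : (Fin K → Bool) → Ω → ℝ)
    (m : ℕ) : Prop :=
  ∀ b : Fin K → Bool, 0 < P (Apast A (K - m) b) →
    ∃ (φ0 : ℝ) (φ : Fin K → ℝ), ∀ a : Fin K → Bool,
      (∫ ω in Apast A (K - m) b, Ypot a ω ∂P) / (P (Apast A (K - m) b)).toReal =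
        φ0 + ∑ j : Fin K, φ j * (if a (rev j) = true then 1 else 0)

/-- `q_{j+1} = P(A(K−1−j)=1 | A̲(K−m)=1_m) − P(A(K−1−j)=1 | A̲(K−m)=0_m)`. -/
def qcoef (P : Measure Ω) (A : Fin K → Ω → Bool) (m : ℕ) (j : Fin K) : ℝ :=
  cP P {ω | A (rev j) ω = true} (Etr A m true) -
    cP P {ω | A (rev j) ω = true} (Etr A m false)

end

noncomputable section

variable {Ω : Type*} {𝓛 : Type*} {K : ℕ}

lemma Lpast_congr (L : Fin K → Ω → 𝓛) {t : ℕ} {l l' : Fin K → 𝓛}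
    (h : ∀ j : Fin K, (j : ℕ) ≤ t → l j = l' j) : Lpast L t l = Lpast L t l' := by
  ext ω
  simp only [Lpast, Set.mem_ofPred_eq]
  exact forall_congr' fun j => forall_congr' fun hj => by rw [h j hj]

lemma Apast_congr (A : Fin K → Ω → Bool) {t : ℕ} {c c' : Fin K → Bool}
    (h : ∀ j : Fin K, (j : ℕ) < t → c j = c' j) : Apast A t c = Apast A t c' := by
  ext ω
  simp only [Apast, Set.mem_ofPred_eq]
  exact forall_congr' fun j => forall_congr' fun hj => by rw [h j hj]

lemma Apast_zero (A : Fin K → Ω → Bool) (c : Fin K → Bool) : Apast A 0 c = Set.univ :=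
  Set.eq_univ_of_forall fun _ _ hk => absurd hk (Nat.not_lt_zero _)

lemma Apast_eq_Aseg_zero (A : Fin K → Ω → Bool) (t : ℕ) (c : Fin K → Bool) :
    Apast A t c = Aseg A 0 t c := by
  simp [Apast, Aseg]

lemma Aseg_self (A : Fin K → Ω → Bool) (s : ℕ) (c : Fin K → Bool) : Aseg A s s c = Set.univ :=
  Set.eq_univ_of_forall fun _ _ hs hk => absurd (hs.trans_lt hk) (lt_irrefl s)

lemma Apast_succ (A : Fin K → Ω → Bool) (c : Fin K → Bool) {t : ℕ} (ht : t < K) :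
    Apast A (t + 1) c = {ω | A ⟨t, ht⟩ ω = c ⟨t, ht⟩} ∩ Apast A t c := by
  ext ω
  simp only [Apast, Set.mem_inter_iff, Set.mem_ofPred_eq, Nat.lt_succ_iff_lt_or_eq]
  refine ⟨fun h => ⟨h _ (Or.inr rfl), fun k hk => h k (Or.inl hk)⟩, ?_⟩
  rintro ⟨ht, h⟩ k (hk | hk)
  exacts [h k hk, (Fin.ext hk : k = ⟨t, _⟩) ▸ ht]

lemma Aseg_succ (A : Fin K → Ω → Bool) (c : Fin K → Bool) {s t : ℕ} (hst : s ≤ t)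
    (ht : t < K) : Aseg A s (t + 1) c = {ω | A ⟨t, ht⟩ ω = c ⟨t, ht⟩} ∩ Aseg A s t c := by
  ext ω
  simp only [Aseg, Set.mem_inter_iff, Set.mem_ofPred_eq, Nat.lt_succ_iff_lt_or_eq]
  refine ⟨fun h => ⟨h _ hst (Or.inr rfl), fun k hs hk => h k hs (Or.inl hk)⟩, ?_⟩
  rintro ⟨ht, h⟩ k hs (hk | hk)
  exacts [h k hs hk, (Fin.ext hk : k = ⟨t, _⟩) ▸ ht]

def window (K s t : ℕ) : Finset (Fin K) :=
  univ.filter fun k => s ≤ (k : ℕ) ∧ (k : ℕ) < t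

lemma window_self (K s : ℕ) : window K s s = ∅ :=
  filter_eq_empty_iff.2 fun _ _ h => (h.1.trans_lt h.2).false

lemma window_succ {s t : ℕ} (hst : s ≤ t) (ht : t < K) :
    window K s (t + 1) = insert ⟨t, ht⟩ (window K s t) := by
  ext k
  simp only [window, mem_filter, mem_univ, true_and, mem_insert, Fin.ext_iff]
  omega

lemma not_mem_window (s : ℕ) {t : ℕ} (ht : t < K) : (⟨t, ht⟩ : Fin K) ∉ window K s t := by
  simp [window]

lemma window_top (s : ℕ) : window K s K = univ.filter fun k : Fin K => s ≤ (k : ℕ) := by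
  simp [window]

lemma window_zero_top : window K 0 K = univ := by
  simp [window]

def histCell (A : Fin K → Ω → Bool) (L : Fin K → Ω → 𝓛) (t : ℕ) (ω : Ω) : Set Ω :=
  Lpast L t (fun j => L j ω) ∩ Apast A t (fun j => A j ω)

def histMap (A : Fin K → Ω → Bool) (L : Fin K → Ω → 𝓛) (t : ℕ) (ω : Ω) :
    ({j : Fin K // (j : ℕ) ≤ t} → 𝓛) × ({j : Fin K // (j : ℕ) < t} → Bool) :=
  (fun j => L j ω, fun j => A j ω)

section History

variable {A : Fin K → Ω → Bool} {L : Fin K → Ω → 𝓛}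

lemma histMap_preimage_singleton (t : ℕ) (ω : Ω) :
    histMap A L t ⁻¹' {histMap A L t ω} = histCell A L t ω := by
  ext ω'
  simp [histMap, histCell, Lpast, Apast, funext_iff]

lemma histCell_eq_of_mem {t k : ℕ} {ω ω' : Ω} (h : ω' ∈ histCell A L t ω) (hk : k ≤ t) :
    histCell A L k ω' = histCell A L k ω := by
  rw [histCell, histCell, Lpast_congr L fun j hj => h.1 j (hj.trans hk),
    Apast_congr A fun j hj => h.2 j (hj.trans_le hk)]

lemma mem_Apast_iff_of_mem_histCell {t : ℕ} {ω ω' : Ω} (h : ω' ∈ histCell A L t ω)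
    (c : Fin K → Bool) : ω' ∈ Apast A t c ↔ ω ∈ Apast A t c := by
  simp only [Apast, Set.mem_ofPred_eq]
  exact forall_congr' fun k => forall_congr' fun hk => by rw [h.2 k hk]

end History

/-- The paper's `(b̄, a_m)` when `n = K - m`. -/
def suffixed (n : ℕ) (b : {j : Fin K // (j : ℕ) < n} → Bool) (a : Bool) : Fin K → Bool :=
  fun k => if h : (k : ℕ) < n then b ⟨k, h⟩ else a

def prefixMap (A : Fin K → Ω → Bool) (n : ℕ) (ω : Ω) : {j : Fin K // (j : ℕ) < n} → Bool :=
  fun j => A j ω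

section Prefix

variable {A : Fin K → Ω → Bool}

lemma prefixMap_preimage_singleton (n : ℕ) (b : {j : Fin K // (j : ℕ) < n} → Bool) (a : Bool) :
    prefixMap A n ⁻¹' {b} = Apast A n (suffixed n b a) := by
  ext ω
  simp only [prefixMap, Apast, suffixed, Set.mem_preimage, Set.mem_singleton_iff,
    Set.mem_ofPred_eq, funext_iff, Subtype.forall]
  exact forall_congr' fun k => forall_congr' fun hk => by rw [dif_pos hk]

lemma Etr_inter_prefixMap_preimage (m : ℕ) (b : {j : Fin K // (j : ℕ) < K - m} → Bool)
    (a : Bool) : Etr A m a ∩ prefixMap A (K - m) ⁻¹' {b} = Apast A K (suffixed (K - m) b a) := by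
  ext ω
  simp only [Etr, EtrV, prefixMap, Apast, suffixed, Set.mem_inter_iff, Set.mem_preimage,
    Set.mem_singleton_iff, Set.mem_ofPred_eq, funext_iff, Subtype.forall]
  refine ⟨fun ⟨h1, h2⟩ k _ => ?_, fun h => ⟨fun k hk => ?_, fun k hk => ?_⟩⟩
  · split_ifs with hk
    exacts [h2 k hk, h1 k (not_lt.1 hk)]
  · simpa [not_lt.2 hk] using h k k.isLt
  · simpa [hk] using h k k.isLt

lemma Aseg_suffixed (m : ℕ) (b : {j : Fin K // (j : ℕ) < K - m} → Bool) (a : Bool) :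
    Aseg A (K - m) K (suffixed (K - m) b a) = Etr A m a := by
  ext ω
  simp only [Aseg, Etr, EtrV, suffixed, Set.mem_ofPred_eq]
  exact forall_congr' fun k => forall_congr' fun hk => by simp [k.isLt, not_lt.2 hk]

end Prefix

/-- The right-hand side of `MSMeq` and of `A5ok`. -/
def linPred (φ0 : ℝ) (φ : Fin K → ℝ) (a : Fin K → Bool) : ℝ :=
  φ0 + ∑ j : Fin K, φ j * (if a (rev j) = true then 1 else 0)

lemma linPred_suffixed_true_sub_false (φ0 : ℝ) (φ : Fin K → ℝ) (m : ℕ)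
    (b : {j : Fin K // (j : ℕ) < K - m} → Bool) :
    linPred φ0 φ (suffixed (K - m) b true) - linPred φ0 φ (suffixed (K - m) b false) =
      ∑ j ∈ univ.filter (fun j : Fin K => (j : ℕ) < m), φ j := by
  simp only [linPred, add_sub_add_left_eq_sub, ← sum_sub_distrib, ← mul_sub, sum_filter]
  refine sum_congr rfl fun j _ => ?_
  have h : ((rev j : Fin K) : ℕ) < K - m ↔ ¬ (j : ℕ) < m := by
    have := j.isLt
    simp only [rev]
    omega
  by_cases hj : (j : ℕ) < m <;> simp [suffixed, h, hj]

variable [MeasurableSpace Ω]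

lemma setIntegral_eq_sum_preimage {μ : Measure Ω} {β : Type*} [Fintype β] [MeasurableSpace β]
    [MeasurableSingletonClass β] {h : Ω → β} (hh : Measurable h) {S : Set Ω}
    (hS : MeasurableSet S) {f : Ω → ℝ} (hf : ∀ b, IntegrableOn f (S ∩ h ⁻¹' {b}) μ) :
    ∫ ω in S, f ω ∂μ = ∑ b, ∫ ω in S ∩ h ⁻¹' {b}, f ω ∂μ := by
  have hdisj : Pairwise (Function.onFun Disjoint fun b => S ∩ h ⁻¹' {b}) := fun b b' hbb' =>
    ((Set.disjoint_singleton.2 hbb').preimage h).mono Set.inter_subset_right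
      Set.inter_subset_right
  rw [← integral_iUnion_fintype (fun b => hS.inter (hh (measurableSet_singleton b))) hdisj hf,
    ← Set.inter_iUnion, ← Set.preimage_iUnion, Set.iUnion_of_singleton, Set.preimage_univ,
    Set.inter_univ]

lemma integrable_comp_mul_of_finite {μ : Measure Ω} {β : Type*} [Fintype β] [MeasurableSpace β]
    [MeasurableSingletonClass β] {h : Ω → β} (hh : Measurable h) (g : β → ℝ) {X : Ω → ℝ}
    (hX : Integrable X μ) : Integrable (fun ω => g (h ω) * X ω) μ :=
  hX.bdd_mul ((measurable_of_countable g).comp hh).aestronglyMeasurable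
    (ae_of_all _ fun ω => single_le_sum (f := fun b => ‖g b‖) (fun _ _ => norm_nonneg _)
      (mem_univ (h ω)))

/-- This holds also when `P F = 0`, where `cP` takes its junk value `0`. -/
lemma cP_mul_measureReal (P : Measure Ω) [IsFiniteMeasure P] (E F : Set Ω) :
    cP P E F * P.real F = P.real (E ∩ F) := by
  rcases eq_or_ne (P.real F) 0 with hF | hF
  · rw [hF, mul_zero]
    exact (le_antisymm (hF ▸ measureReal_mono Set.inter_subset_right) measureReal_nonneg).symm
  · exact div_mul_cancel₀ _ hF

lemma setIntegral_inter_eq_cP_mul {P : Measure Ω} [IsFiniteMeasure P] {X : Ω → ℝ}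
    (hX : Measurable X) {T D : Set Ω}
    (hfac : ∀ B : Set ℝ, MeasurableSet B → cP P (X ⁻¹' B ∩ T) D = cP P (X ⁻¹' B) D * cP P T D) :
    ∫ ω in T ∩ D, X ω ∂P = cP P T D * ∫ ω in D, X ω ∂P := by
  have hc : 0 ≤ cP P T D := by unfold cP; positivity
  have hmap : (P.restrict (T ∩ D)).map X = ENNReal.ofReal (cP P T D) • (P.restrict D).map X := by
    ext B hB
    rw [Measure.smul_apply, Measure.map_apply hX hB, Measure.map_apply hX hB,
      Measure.restrict_apply (hX hB), Measure.restrict_apply (hX hB), smul_eq_mul,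
      ← Set.inter_assoc, ← ENNReal.ofReal_toReal (measure_ne_top P (X ⁻¹' B ∩ T ∩ D)),
      ← ENNReal.ofReal_toReal (measure_ne_top P (X ⁻¹' B ∩ D)), ← ENNReal.ofReal_mul hc]
    congr 1
    calc P.real (X ⁻¹' B ∩ T ∩ D) = cP P (X ⁻¹' B ∩ T) D * P.real D :=
          (cP_mul_measureReal P _ _).symm
      _ = cP P T D * (cP P (X ⁻¹' B) D * P.real D) := by rw [hfac B hB]; ring
      _ = cP P T D * P.real (X ⁻¹' B ∩ D) := by rw [cP_mul_measureReal]
  have hint : ∀ S : Set Ω, ∫ x, x ∂(P.restrict S).map X = ∫ ω in S, X ω ∂P := fun S =>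
    integral_map (f := id) hX.aemeasurable aestronglyMeasurable_id
  rw [← hint, ← hint, hmap, integral_smul_measure, ENNReal.toReal_ofReal hc, smul_eq_mul]

lemma measurableSet_A_eq {A : Fin K → Ω → Bool} (hA : ∀ k, Measurable (A k)) (k : Fin K)
    (a : Bool) : MeasurableSet {ω | A k ω = a} :=
  hA k (measurableSet_singleton a)

lemma measurableSet_Apast {A : Fin K → Ω → Bool} (hA : ∀ k, Measurable (A k)) (t : ℕ)
    (c : Fin K → Bool) : MeasurableSet (Apast A t c) := by
  simp only [Apast, Set.ofPred_forall]
  exact .iInter fun k => .iInter fun _ => measurableSet_A_eq hA k (c k)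

lemma measurableSet_Etr {A : Fin K → Ω → Bool} (hA : ∀ k, Measurable (A k)) (m : ℕ)
    (a : Bool) : MeasurableSet (Etr A m a) := by
  simp only [Etr, EtrV, Set.ofPred_forall]
  exact .iInter fun k => .iInter fun _ => measurableSet_A_eq hA k a

lemma measurable_prefixMap {A : Fin K → Ω → Bool} (hA : ∀ k, Measurable (A k)) (n : ℕ) :
    Measurable (prefixMap A n) :=
  measurable_pi_lambda _ fun j => hA j

lemma measurable_histMap [MeasurableSpace 𝓛] {A : Fin K → Ω → Bool} {L : Fin K → Ω → 𝓛}
    (hA : ∀ k, Measurable (A k)) (hL : ∀ k, Measurable (L k)) (t : ℕ) :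
    Measurable (histMap A L t) := by
  unfold histMap
  exact (measurable_pi_lambda _ fun j : {j : Fin K // (j : ℕ) ≤ t} => hL j).prodMk
    (measurable_pi_lambda _ fun j : {j : Fin K // (j : ℕ) < t} => hA j)

lemma measurableSet_histCell [MeasurableSpace 𝓛] [MeasurableSingletonClass 𝓛]
    {A : Fin K → Ω → Bool} {L : Fin K → Ω → 𝓛} (hA : ∀ k, Measurable (A k))
    (hL : ∀ k, Measurable (L k)) (t : ℕ) (ω : Ω) : MeasurableSet (histCell A L t ω) := by
  rw [← histMap_preimage_singleton]
  exact measurable_histMap hA hL t (measurableSet_singleton _)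

section Propensity

variable {P : Measure Ω} {A : Fin K → Ω → Bool} {L : Fin K → Ω → 𝓛}

variable (P A L) in
/-- Definitionally the time-`k` factor of the denominators of `Wsw` and `Wrsw`. -/
def propensity (k : Fin K) (ω : Ω) : ℝ :=
  cP P {ω' | A k ω' = A k ω} (histCell A L k ω)

lemma propensity_eq_of_mem_histCell {t : ℕ} {ω ω' : Ω} (h : ω' ∈ histCell A L t ω) {k : Fin K}
    (hk : (k : ℕ) < t) : propensity P A L k ω' = propensity P A L k ω := by
  rw [propensity, propensity, h.2 k hk, histCell_eq_of_mem h hk.le]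

lemma eqOn_div_propensity_mul {t : Fin K} {a : Bool} {ω₀ : Ω} {G X : Ω → ℝ}
    (hG : ∀ ω ∈ histCell A L t ω₀, G ω = G ω₀) :
    Set.EqOn (fun ω => G ω / propensity P A L t ω * X ω)
      (fun ω => G ω₀ / cP P {ω | A t ω = a} (histCell A L t ω₀) * X ω)
      ({ω | A t ω = a} ∩ histCell A L t ω₀) := fun ω hω => by
  dsimp only
  rw [hG ω hω.2, propensity, show A t ω = a from hω.1, histCell_eq_of_mem hω.2 le_rfl]

variable (P A L) in
def CondMeanIndep (X : Ω → ℝ) : Prop :=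
  ∀ (t : Fin K) (a : Bool) (ω₀ : Ω), 0 < P (histCell A L t ω₀) →
    ∫ ω in {ω | A t ω = a} ∩ histCell A L t ω₀, X ω ∂P =
      cP P {ω | A t ω = a} (histCell A L t ω₀) * ∫ ω in histCell A L t ω₀, X ω ∂P

lemma condMeanIndep_one [IsFiniteMeasure P] : CondMeanIndep P A L fun _ => 1 := by
  intro t a _ _
  simp only [setIntegral_const, smul_eq_mul, mul_one]
  exact (cP_mul_measureReal P _ _).symm

lemma condMeanIndep_of_A2 [IsFiniteMeasure P] {Ypot : (Fin K → Bool) → Ω → ℝ}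
    (hYpm : ∀ c, Measurable (Ypot c)) (hA2 : A2ok P A L Ypot) (c : Fin K → Bool) :
    CondMeanIndep P A L (Ypot c) := fun t a _ hpos =>
  setIntegral_inter_eq_cP_mul (hYpm c) fun B hB => hA2 t c B hB a _ _ hpos

variable [MeasurableSpace 𝓛] [MeasurableSingletonClass 𝓛] {X : Ω → ℝ}

lemma setIntegral_histCell_div_propensity_mul (hA : ∀ k, Measurable (A k))
    (hL : ∀ k, Measurable (L k)) (hA3 : A3ok P A L) (hXind : CondMeanIndep P A L X) (t : Fin K)
    (a : Bool) (ω₀ : Ω) {G : Ω → ℝ} (hG : ∀ ω ∈ histCell A L t ω₀, G ω = G ω₀) :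
    ∫ ω in {ω | A t ω = a} ∩ histCell A L t ω₀, G ω / propensity P A L t ω * X ω ∂P =
      G ω₀ * ∫ ω in histCell A L t ω₀, X ω ∂P := by
  rw [setIntegral_congr_fun ((measurableSet_A_eq hA t a).inter
    (measurableSet_histCell hA hL t ω₀)) (eqOn_div_propensity_mul hG), integral_const_mul]
  rcases eq_zero_or_pos (P (histCell A L t ω₀)) with hC0 | hCpos
  · rw [setIntegral_measure_zero _ hC0,
      setIntegral_measure_zero _ (measure_mono_null Set.inter_subset_right hC0), mul_zero,
      mul_zero]
  · -- `1 / propensity` cancels the factor `P(A(t) = a | cell)` produced by `hXind`.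
    have hπ : 0 < cP P {ω | A t ω = a} (histCell A L t ω₀) := hA3 t a _ _ hCpos
    rw [hXind t a ω₀ hCpos, ← mul_assoc, div_mul_cancel₀ _ hπ.ne']

lemma setIntegral_div_propensity_mul [Fintype 𝓛] (hA : ∀ k, Measurable (A k))
    (hL : ∀ k, Measurable (L k)) (hA3 : A3ok P A L) (hX : Integrable X P)
    (hXind : CondMeanIndep P A L X) (t : Fin K) (a : Bool) {G : Ω → ℝ}
    (hG : ∀ ω, ∀ ω' ∈ histCell A L t ω, G ω' = G ω) :
    ∫ ω in {ω | A t ω = a}, G ω / propensity P A L t ω * X ω ∂P = ∫ ω, G ω * X ω ∂P := by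
  have hcell : ∀ b,
      IntegrableOn (fun ω => G ω / propensity P A L t ω * X ω)
        ({ω | A t ω = a} ∩ histMap A L t ⁻¹' {b}) P ∧
      IntegrableOn (fun ω => G ω * X ω) (Set.univ ∩ histMap A L t ⁻¹' {b}) P ∧
      ∫ ω in {ω | A t ω = a} ∩ histMap A L t ⁻¹' {b}, G ω / propensity P A L t ω * X ω ∂P =
        ∫ ω in Set.univ ∩ histMap A L t ⁻¹' {b}, G ω * X ω ∂P := by
    intro b
    rcases (histMap A L t ⁻¹' {b}).eq_empty_or_nonempty with hb | ⟨ω₀, hω₀⟩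
    · simp [hb]
    obtain rfl : histMap A L t ω₀ = b := hω₀
    rw [Set.univ_inter, histMap_preimage_singleton]
    have hG₀ : ∀ ω ∈ histCell A L t ω₀, G ω = G ω₀ := fun ω => hG ω₀ ω
    have hC := measurableSet_histCell hA hL t ω₀
    have h0 : Set.EqOn (fun ω => G ω₀ * X ω) (fun ω => G ω * X ω) (histCell A L t ω₀) :=
      fun ω hω => by dsimp only; rw [hG₀ ω hω]
    refine ⟨(hX.const_mul _).integrableOn.congr_fun (eqOn_div_propensity_mul hG₀).symm
      ((measurableSet_A_eq hA t a).inter hC), (hX.const_mul _).integrableOn.congr_fun h0 hC, ?_⟩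
    rw [setIntegral_histCell_div_propensity_mul hA hL hA3 hXind t a ω₀ hG₀,
      ← setIntegral_congr_fun hC h0, integral_const_mul]
  rw [← setIntegral_univ (μ := P),
    setIntegral_eq_sum_preimage (measurable_histMap hA hL t) (measurableSet_A_eq hA t a)
      fun b => (hcell b).1,
    setIntegral_eq_sum_preimage (measurable_histMap hA hL t) .univ fun b => (hcell b).2.1]
  exact sum_congr rfl fun b _ => (hcell b).2.2

end Propensity

section GFormula

variable {P : Measure Ω} {A : Fin K → Ω → Bool} {L : Fin K → Ω → 𝓛}

lemma prod_window_cP_Aseg [IsProbabilityMeasure P] (c : Fin K → Bool) {s t : ℕ} (hst : s ≤ t)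
    (ht : t ≤ K) :
    ∏ k ∈ window K s t, cP P {ω | A k ω = c k} (Aseg A s k c) = P.real (Aseg A s t c) := by
  induction t, hst using Nat.le_induction with
  | base => rw [window_self, prod_empty, Aseg_self, probReal_univ]
  | succ t hst ih =>
    rw [window_succ hst ht, prod_insert (not_mem_window s ht), ih (Nat.le_of_succ_le ht),
      Aseg_succ A c hst ht]
    exact cP_mul_measureReal P _ _

variable [MeasurableSpace 𝓛] [MeasurableSingletonClass 𝓛] [Fintype 𝓛] {X : Ω → ℝ}

lemma setIntegral_Apast_succ_prod_window (hA : ∀ k, Measurable (A k))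
    (hL : ∀ k, Measurable (L k)) (hA3 : A3ok P A L) (hX : Integrable X P)
    (hXind : CondMeanIndep P A L X) (c : Fin K → Bool) {s t : ℕ} (hst : s ≤ t) (ht : t < K) :
    ∫ ω in Apast A (t + 1) c, (∏ k ∈ window K s (t + 1), (propensity P A L k ω)⁻¹) * X ω ∂P =
      ∫ ω in Apast A t c, (∏ k ∈ window K s t, (propensity P A L k ω)⁻¹) * X ω ∂P := by
  set G : Ω → ℝ :=
    (Apast A t c).indicator fun ω => ∏ k ∈ window K s t, (propensity P A L k ω)⁻¹
  have hG : ∀ ω, ∀ ω' ∈ histCell A L t ω, G ω' = G ω := by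
    intro ω ω' h
    have hprod : ∏ k ∈ window K s t, (propensity P A L k ω')⁻¹ =
        ∏ k ∈ window K s t, (propensity P A L k ω)⁻¹ :=
      prod_congr rfl fun k hk => by rw [propensity_eq_of_mem_histCell h (mem_filter.1 hk).2.2]
    simp only [G, Set.indicator_apply, mem_Apast_iff_of_mem_histCell h, hprod]
  have hS := measurableSet_Apast hA t c
  -- Split `Ā(t) = c̄(t)` into `A(t) = c(t)` and `Ā(t-1) = c̄(t-1)`; the latter goes into `G`.
  calc _ = ∫ ω in {ω | A ⟨t, ht⟩ ω = c ⟨t, ht⟩}, G ω / propensity P A L ⟨t, ht⟩ ω * X ω ∂P := by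
        rw [Apast_succ A c ht, ← setIntegral_indicator hS]
        refine setIntegral_congr_fun (measurableSet_A_eq hA _ _) fun ω _ => ?_
        simp only [G, Set.indicator_apply]
        split_ifs
        · rw [window_succ hst ht, prod_insert (not_mem_window s ht)]
          ring
        · simp
    _ = ∫ ω, G ω * X ω ∂P := setIntegral_div_propensity_mul hA hL hA3 hX hXind _ _ hG
    _ = _ := by
        rw [← integral_indicator hS]
        simp only [G, Set.indicator_mul_left]

lemma setIntegral_Apast_prod_inv_propensity_mul (hA : ∀ k, Measurable (A k))
    (hL : ∀ k, Measurable (L k)) (hA3 : A3ok P A L) (hX : Integrable X P)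
    (hXind : CondMeanIndep P A L X) (c : Fin K → Bool) {s : ℕ} (hs : s ≤ K) :
    ∫ ω in Apast A K c, (∏ k ∈ window K s K, (propensity P A L k ω)⁻¹) * X ω ∂P =
      ∫ ω in Apast A s c, X ω ∂P := by
  suffices ∀ t, s ≤ t → t ≤ K → ∫ ω in Apast A t c,
      (∏ k ∈ window K s t, (propensity P A L k ω)⁻¹) * X ω ∂P = ∫ ω in Apast A s c, X ω ∂P from
    this K hs le_rfl
  intro t hst
  induction t, hst using Nat.le_induction with
  | base => intro; simp [window_self]
  | succ t hst ih =>
    intro ht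
    rw [setIntegral_Apast_succ_prod_window hA hL hA3 hX hXind c hst ht, ih (Nat.le_of_succ_le ht)]

end GFormula

section Arms

variable {P : Measure Ω} {A : Fin K → Ω → Bool} {L : Fin K → Ω → 𝓛}

lemma setIntegral_Etr_eq_sum (hA : ∀ k, Measurable (A k)) (m : ℕ) (a : Bool) {F : Ω → ℝ}
    (hF : ∀ b, IntegrableOn F (Apast A K (suffixed (K - m) b a)) P) :
    ∫ ω in Etr A m a, F ω ∂P = ∑ b, ∫ ω in Apast A K (suffixed (K - m) b a), F ω ∂P := by
  simp only [← Etr_inter_prefixMap_preimage] at hF ⊢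
  exact setIntegral_eq_sum_preimage (measurable_prefixMap hA _) (measurableSet_Etr hA m a) hF

lemma integral_eq_sum_Apast_suffixed (hA : ∀ k, Measurable (A k)) (n : ℕ) (a : Bool)
    {F : Ω → ℝ} (hF : ∀ b, IntegrableOn F (Apast A n (suffixed n b a)) P) :
    ∫ ω, F ω ∂P = ∑ b, ∫ ω in Apast A n (suffixed n b a), F ω ∂P := by
  have h := setIntegral_eq_sum_preimage (μ := P) (measurable_prefixMap hA n) .univ (f := F)
    fun b => by rw [Set.univ_inter, prefixMap_preimage_singleton n b a]; exact hF b
  simpa only [setIntegral_univ, Set.univ_inter, prefixMap_preimage_singleton n _ a] using h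

lemma setIntegral_Etr_comp [IsFiniteMeasure P] (hA : ∀ k, Measurable (A k)) (m : ℕ) (a : Bool)
    (φ : (Fin K → Bool) → ℝ) :
    ∫ ω in Etr A m a, φ (fun k => A k ω) ∂P =
      ∑ b, P.real (Apast A K (suffixed (K - m) b a)) * φ (suffixed (K - m) b a) := by
  have hconst : ∀ b, Set.EqOn (fun ω => φ (fun k => A k ω)) (fun _ => φ (suffixed (K - m) b a))
      (Apast A K (suffixed (K - m) b a)) := fun b ω hω => by
    simp only [funext fun k => hω k k.isLt]
  have hS := fun b => measurableSet_Apast hA K (suffixed (K - m) b a)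
  rw [setIntegral_Etr_eq_sum hA m a fun b => (integrableOn_const (measure_ne_top _ _)).congr_fun
    (hconst b).symm (hS b)]
  exact sum_congr rfl fun b _ => by
    rw [setIntegral_congr_fun (hS b) (hconst b), setIntegral_const, smul_eq_mul]

lemma setIntegral_linPred_comp [IsFiniteMeasure P] (hA : ∀ k, Measurable (A k)) (E : Set Ω)
    (φ0 : ℝ) (φ : Fin K → ℝ) :
    ∫ ω in E, linPred φ0 φ (fun k => A k ω) ∂P =
      φ0 * P.real E + ∑ j, φ j * P.real ({ω | A (rev j) ω = true} ∩ E) := by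
  have hind : ∀ j ω, (if A (rev j) ω = true then (1 : ℝ) else 0) =
      {ω | A (rev j) ω = true}.indicator 1 ω := fun j ω => by simp [Set.indicator_apply]
  have hint : ∀ j, Integrable (fun ω => φ j * {ω | A (rev j) ω = true}.indicator (1 : Ω → ℝ) ω)
      (P.restrict E) := fun j =>
    ((integrable_const 1).indicator (measurableSet_A_eq hA _ _)).const_mul _
  simp only [linPred, hind]
  rw [integral_add (integrable_const _) (integrable_finsetSum _ fun j _ => hint j),
    integral_finsetSum _ fun j _ => hint j, setIntegral_const, smul_eq_mul, mul_comm]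
  congr 1
  refine sum_congr rfl fun j _ => ?_
  rw [integral_const_mul, setIntegral_indicator (measurableSet_A_eq hA _ _), Set.inter_comm]
  simp

lemma Wsw_eq_of_mem_Apast [IsProbabilityMeasure P] {c : Fin K → Bool} {ω : Ω}
    (hω : ω ∈ Apast A K c) :
    Wsw P A L ω = P.real (Apast A K c) * ∏ k, (propensity P A L k ω)⁻¹ := by
  have hnum : ∀ k : Fin K, cP P {ω' | A k ω' = A k ω} (Apast A k fun j => A j ω) =
      cP P {ω' | A k ω' = c k} (Aseg A 0 k c) := fun k => by
    simp only [fun j => hω j j.isLt, Apast_eq_Aseg_zero]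
  calc Wsw P A L ω = ∏ k, cP P {ω' | A k ω' = c k} (Aseg A 0 k c) / propensity P A L k ω :=
        prod_congr rfl fun k _ => by rw [← hnum k]; rfl
    _ = _ := by
      rw [prod_div_distrib, ← window_zero_top, prod_window_cP_Aseg c (Nat.zero_le K) le_rfl,
        ← Apast_eq_Aseg_zero, div_eq_mul_inv, prod_inv_distrib]

lemma Wrsw_eq_of_mem_Apast [IsProbabilityMeasure P] {m : ℕ}
    {b : {j : Fin K // (j : ℕ) < K - m} → Bool} {a : Bool} {ω : Ω}
    (hω : ω ∈ Apast A K (suffixed (K - m) b a)) :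
    Wrsw P A L m ω = P.real (Etr A m a) * ∏ k ∈ window K (K - m) K, (propensity P A L k ω)⁻¹ := by
  have hnum : ∀ k : Fin K, cP P {ω' | A k ω' = A k ω} (Aseg A (K - m) k fun j => A j ω) =
      cP P {ω' | A k ω' = suffixed (K - m) b a k} (Aseg A (K - m) k (suffixed (K - m) b a)) :=
    fun k => by simp only [fun j => hω j j.isLt]
  calc Wrsw P A L m ω = ∏ k ∈ window K (K - m) K, cP P {ω' | A k ω' = suffixed (K - m) b a k}
        (Aseg A (K - m) k (suffixed (K - m) b a)) / propensity P A L k ω := by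
        rw [window_top]
        exact prod_congr rfl fun k _ => by rw [← hnum k]; rfl
    _ = _ := by
      rw [prod_div_distrib, prod_window_cP_Aseg _ (Nat.sub_le K m) le_rfl, Aseg_suffixed,
        div_eq_mul_inv, prod_inv_distrib]

variable [MeasurableSpace 𝓛] [MeasurableSingletonClass 𝓛] [Fintype 𝓛]

lemma integrable_prod_inv_propensity_mul (hA : ∀ k, Measurable (A k))
    (hL : ∀ k, Measurable (L k)) (S : Finset (Fin K)) {X : Ω → ℝ} (hX : Integrable X P) :
    Integrable (fun ω => (∏ k ∈ S, (propensity P A L k ω)⁻¹) * X ω) P :=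
  integrable_comp_mul_of_finite (h := fun ω => ((fun j => L j ω, fun j => A j ω) :
      (Fin K → 𝓛) × (Fin K → Bool)))
    ((measurable_pi_lambda _ hL).prodMk (measurable_pi_lambda _ hA))
    (fun p => ∏ k ∈ S, (cP P {ω' | A k ω' = p.2 k} (Lpast L k p.1 ∩ Apast A k p.2))⁻¹) hX

lemma setIntegral_Etr_weight_mul (hA : ∀ k, Measurable (A k)) (hL : ∀ k, Measurable (L k))
    (hA3 : A3ok P A L) {s : ℕ} (hs : s ≤ K) (m : ℕ) (a : Bool) {W F : Ω → ℝ}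
    {N : ({j : Fin K // (j : ℕ) < K - m} → Bool) → ℝ} {X : (Fin K → Bool) → Ω → ℝ}
    (hX : ∀ c, Integrable (X c) P) (hXind : ∀ c, CondMeanIndep P A L (X c))
    (hWF : ∀ b, ∀ ω ∈ Apast A K (suffixed (K - m) b a), W ω * F ω =
      N b * ((∏ k ∈ window K s K, (propensity P A L k ω)⁻¹) * X (suffixed (K - m) b a) ω)) :
    ∫ ω in Etr A m a, W ω * F ω ∂P =
      ∑ b, N b * ∫ ω in Apast A s (suffixed (K - m) b a), X (suffixed (K - m) b a) ω ∂P := by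
  have hS := fun b => measurableSet_Apast hA K (suffixed (K - m) b a)
  rw [setIntegral_Etr_eq_sum hA m a fun b =>
    ((integrable_prod_inv_propensity_mul hA hL _ (hX _)).const_mul (N b)).integrableOn.congr_fun
      (fun ω hω => (hWF b ω hω).symm) (hS b)]
  refine sum_congr rfl fun b _ => ?_
  rw [setIntegral_congr_fun (hS b) (hWF b), integral_const_mul,
    setIntegral_Apast_prod_inv_propensity_mul hA hL hA3 (hX _) (hXind _) _ hs]

end Arms

lemma qcoef_eq_one {P : Measure Ω} [IsFiniteMeasure P] {A : Fin K → Ω → Bool} {m : ℕ}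
    (hpos : 0 < P (Etr A m true)) {j : Fin K} (hj : (j : ℕ) < m) : qcoef P A m j = 1 := by
  have hrev : K - m ≤ (rev j : ℕ) := by
    have := j.isLt
    simp only [rev]
    omega
  have h1 : Etr A m true ⊆ {ω | A (rev j) ω = true} := fun ω hω => hω _ hrev
  have h0 : {ω | A (rev j) ω = true} ∩ Etr A m false = ∅ :=
    Set.eq_empty_of_forall_notMem fun ω ⟨h, h'⟩ => by simp_all [Etr, EtrV]
  rw [qcoef, cP, cP, Set.inter_eq_self_of_subset_right h1, h0,
    div_self (ENNReal.toReal_pos hpos.ne' (measure_ne_top P _)).ne', measure_empty,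
    ENNReal.toReal_zero, zero_div, sub_zero]

lemma setIntegral_suffixed_true_sub_false_of_A5 {P : Measure Ω} [IsFiniteMeasure P]
    {A : Fin K → Ω → Bool} {Ypot : (Fin K → Bool) → Ω → ℝ} {m : ℕ} (hA5 : A5ok P A Ypot m)
    (b b' : {j : Fin K // (j : ℕ) < K - m} → Bool) :
    ∫ ω in Apast A (K - m) (suffixed (K - m) b false), Ypot (suffixed (K - m) b true) ω ∂P -
        ∫ ω in Apast A (K - m) (suffixed (K - m) b false), Ypot (suffixed (K - m) b false) ω ∂P =
      ∫ ω in Apast A (K - m) (suffixed (K - m) b false), Ypot (suffixed (K - m) b' true) ω ∂P -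
        ∫ ω in Apast A (K - m) (suffixed (K - m) b false), Ypot (suffixed (K - m) b' false) ω ∂P := by
  rcases eq_zero_or_pos (P (Apast A (K - m) (suffixed (K - m) b false))) with h0 | hpos
  · simp only [setIntegral_measure_zero _ h0, sub_self]
  obtain ⟨φ0, φ, hφ⟩ := hA5 _ hpos
  have key : ∀ c, ∫ ω in Apast A (K - m) (suffixed (K - m) b false), Ypot c ω ∂P =
      linPred φ0 φ c * P.real (Apast A (K - m) (suffixed (K - m) b false)) := fun c =>
    (div_eq_iff (ENNReal.toReal_pos hpos.ne' (measure_ne_top P _)).ne').1 (hφ c)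
  rw [key, key, key, key, ← sub_mul, ← sub_mul, linPred_suffixed_true_sub_false,
    linPred_suffixed_true_sub_false]

def armMean (P : Measure Ω) (A : Fin K → Ω → Bool) (m : ℕ) (W Y : Ω → ℝ) (a : Bool) : ℝ :=
  (∫ ω in Etr A m a, W ω * Y ω ∂P) / ∫ ω in Etr A m a, W ω ∂P

lemma θW_eq_armMean_sub (P : Measure Ω) (A : Fin K → Ω → Bool) (m : ℕ) (W Y : Ω → ℝ) :
    θW P A m W Y = armMean P A m W Y true - armMean P A m W Y false :=
  rfl

section Contrasts

variable {P : Measure Ω} [IsProbabilityMeasure P] {A : Fin K → Ω → Bool} {L : Fin K → Ω → 𝓛}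
  [MeasurableSpace 𝓛] [MeasurableSingletonClass 𝓛] [Fintype 𝓛]
  {Y : Ω → ℝ} {Ypot : (Fin K → Bool) → Ω → ℝ}

lemma setIntegral_Etr_Wsw_mul (hA : ∀ k, Measurable (A k)) (hL : ∀ k, Measurable (L k))
    (hA3 : A3ok P A L) (m : ℕ) (a : Bool) {F : Ω → ℝ} {X : (Fin K → Bool) → Ω → ℝ}
    (hX : ∀ c, Integrable (X c) P) (hXind : ∀ c, CondMeanIndep P A L (X c))
    (hF : ∀ c, ∀ ω ∈ Apast A K c, F ω = X c ω) :
    ∫ ω in Etr A m a, Wsw P A L ω * F ω ∂P =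
      ∑ b, P.real (Apast A K (suffixed (K - m) b a)) * ∫ ω, X (suffixed (K - m) b a) ω ∂P := by
  simpa only [Apast_zero, setIntegral_univ] using
    setIntegral_Etr_weight_mul hA hL hA3 (Nat.zero_le K) m a hX hXind
      (N := fun b => P.real (Apast A K (suffixed (K - m) b a))) fun b ω hω => by
        rw [Wsw_eq_of_mem_Apast hω, hF _ ω hω, window_zero_top, mul_assoc]

lemma setIntegral_Etr_Wrsw_mul (hA : ∀ k, Measurable (A k)) (hL : ∀ k, Measurable (L k))
    (hA3 : A3ok P A L) (m : ℕ) (a : Bool) {F : Ω → ℝ} {X : (Fin K → Bool) → Ω → ℝ}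
    (hX : ∀ c, Integrable (X c) P) (hXind : ∀ c, CondMeanIndep P A L (X c))
    (hF : ∀ c, ∀ ω ∈ Apast A K c, F ω = X c ω) :
    ∫ ω in Etr A m a, Wrsw P A L m ω * F ω ∂P = P.real (Etr A m a) *
      ∑ b, ∫ ω in Apast A (K - m) (suffixed (K - m) b a), X (suffixed (K - m) b a) ω ∂P := by
  rw [mul_sum]
  exact setIntegral_Etr_weight_mul hA hL hA3 (Nat.sub_le K m) m a hX hXind fun b ω hω => by
    rw [Wrsw_eq_of_mem_Apast hω, hF _ ω hω, mul_assoc]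

lemma armMean_Wsw (hA : ∀ k, Measurable (A k)) (hL : ∀ k, Measurable (L k))
    (hYpm : ∀ c, Measurable (Ypot c)) (hYpi : ∀ c, Integrable (Ypot c) P)
    (hA1 : A1ok A Y Ypot) (hA2 : A2ok P A L Ypot) (hA3 : A3ok P A L) {ψ0 : ℝ} {ψ : Fin K → ℝ}
    (hMSM : MSMeq P Ypot ψ0 ψ) (m : ℕ) (a : Bool) (hpos : 0 < P (Etr A m a)) :
    armMean P A m (Wsw P A L) Y a = ψ0 + ∑ j, ψ j * cP P {ω | A (rev j) ω = true} (Etr A m a) := by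
  have hE : P.real (Etr A m a) ≠ 0 := (ENNReal.toReal_pos hpos.ne' (measure_ne_top P _)).ne'
  have hnum : ∫ ω in Etr A m a, Wsw P A L ω * Y ω ∂P =
      ψ0 * P.real (Etr A m a) + ∑ j, ψ j * P.real ({ω | A (rev j) ω = true} ∩ Etr A m a) := by
    rw [setIntegral_Etr_Wsw_mul hA hL hA3 m a hYpi (condMeanIndep_of_A2 hYpm hA2)
      fun c ω hω => hA1 c ω fun k => hω k k.isLt, ← setIntegral_linPred_comp hA,
      setIntegral_Etr_comp hA m a]
    exact sum_congr rfl fun b _ => congrArg _ (hMSM _)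
  have hden : ∫ ω in Etr A m a, Wsw P A L ω ∂P = P.real (Etr A m a) := by
    have h := setIntegral_Etr_Wsw_mul hA hL hA3 m a (fun _ => integrable_const (1 : ℝ))
      (fun _ => condMeanIndep_one) (F := fun _ => 1) fun _ _ _ => rfl
    have h1 := setIntegral_Etr_comp (P := P) hA m a fun _ => 1
    simp only [mul_one, integral_const, probReal_univ, smul_eq_mul] at h
    simp only [mul_one, setIntegral_const, smul_eq_mul] at h1
    rw [h, ← h1]
  rw [armMean, hnum, hden, add_div, mul_div_cancel_right₀ _ hE, sum_div]
  exact congrArg _ (sum_congr rfl fun j _ => mul_div_assoc _ _ _)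

lemma armMean_Wrsw (hA : ∀ k, Measurable (A k)) (hL : ∀ k, Measurable (L k))
    (hYpm : ∀ c, Measurable (Ypot c)) (hYpi : ∀ c, Integrable (Ypot c) P)
    (hA1 : A1ok A Y Ypot) (hA2 : A2ok P A L Ypot) (hA3 : A3ok P A L) (m : ℕ) (a : Bool)
    (hpos : 0 < P (Etr A m a)) :
    armMean P A m (Wrsw P A L m) Y a =
      ∑ b, ∫ ω in Apast A (K - m) (suffixed (K - m) b a), Ypot (suffixed (K - m) b a) ω ∂P := by
  have hE : P.real (Etr A m a) ≠ 0 := (ENNReal.toReal_pos hpos.ne' (measure_ne_top P _)).ne'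
  have hden : ∫ ω in Etr A m a, Wrsw P A L m ω ∂P = P.real (Etr A m a) := by
    have h := setIntegral_Etr_Wrsw_mul hA hL hA3 m a (fun _ => integrable_const (1 : ℝ))
      (fun _ => condMeanIndep_one) (F := fun _ => 1) fun _ _ _ => rfl
    rw [← integral_eq_sum_Apast_suffixed hA (K - m) a fun _ => integrableOn_const] at h
    simpa only [mul_one, integral_const, probReal_univ, smul_eq_mul] using h
  rw [armMean, setIntegral_Etr_Wrsw_mul hA hL hA3 m a hYpi (condMeanIndep_of_A2 hYpm hA2)
      fun c ω hω => hA1 c ω fun k => hω k k.isLt, hden, mul_div_cancel_left₀ _ hE]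

lemma θW_Wsw_eq_sum_mul_qcoef (hA : ∀ k, Measurable (A k)) (hL : ∀ k, Measurable (L k))
    (hYpm : ∀ c, Measurable (Ypot c)) (hYpi : ∀ c, Integrable (Ypot c) P)
    (hA1 : A1ok A Y Ypot) (hA2 : A2ok P A L Ypot) (hA3 : A3ok P A L) {ψ0 : ℝ} {ψ : Fin K → ℝ}
    (hMSM : MSMeq P Ypot ψ0 ψ) {m : ℕ} (hpos1 : 0 < P (Etr A m true))
    (hpos0 : 0 < P (Etr A m false)) :
    θW P A m (Wsw P A L) Y = ∑ j, ψ j * qcoef P A m j := by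
  rw [θW_eq_armMean_sub, armMean_Wsw hA hL hYpm hYpi hA1 hA2 hA3 hMSM m true hpos1,
    armMean_Wsw hA hL hYpm hYpi hA1 hA2 hA3 hMSM m false hpos0]
  simp only [qcoef, mul_sub, sum_sub_distrib, add_sub_add_left_eq_sub]

lemma θW_Wrsw_eq_sum_filter_lt (hA : ∀ k, Measurable (A k)) (hL : ∀ k, Measurable (L k))
    (hYpm : ∀ c, Measurable (Ypot c)) (hYpi : ∀ c, Integrable (Ypot c) P)
    (hA1 : A1ok A Y Ypot) (hA2 : A2ok P A L Ypot) (hA3 : A3ok P A L) {ψ0 : ℝ} {ψ : Fin K → ℝ}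
    (hMSM : MSMeq P Ypot ψ0 ψ) {m : ℕ} (hA5 : A5ok P A Ypot m) (hpos1 : 0 < P (Etr A m true))
    (hpos0 : 0 < P (Etr A m false)) :
    θW P A m (Wrsw P A L m) Y = ∑ j ∈ univ.filter (fun j : Fin K => (j : ℕ) < m), ψ j := by
  have hprefix : ∀ b a, Apast A (K - m) (suffixed (K - m) b a) =
      Apast A (K - m) (suffixed (K - m) b false) := fun b a => by
    rw [← prefixMap_preimage_singleton, ← prefixMap_preimage_singleton]
  let b₀ : {j : Fin K // (j : ℕ) < K - m} → Bool := fun _ => false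
  rw [θW_eq_armMean_sub, armMean_Wrsw hA hL hYpm hYpi hA1 hA2 hA3 m true hpos1,
    armMean_Wrsw hA hL hYpm hYpi hA1 hA2 hA3 m false hpos0]
  simp only [hprefix _ true, ← sum_sub_distrib, setIntegral_suffixed_true_sub_false_of_A5 hA5 _ b₀]
  rw [sum_sub_distrib,
    ← integral_eq_sum_Apast_suffixed hA (K - m) false fun _ => (hYpi _).integrableOn,
    ← integral_eq_sum_Apast_suffixed hA (K - m) false fun _ => (hYpi _).integrableOn,
    hMSM, hMSM]
  exact linPred_suffixed_true_sub_false ψ0 ψ m b₀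

end Contrasts

end

theorem theorem3_general
    {Ω : Type*} [MeasurableSpace Ω] {𝓛 : Type*} [MeasurableSpace 𝓛]
    [Fintype 𝓛] [MeasurableSingletonClass 𝓛]
    (P : Measure Ω) [IsProbabilityMeasure P]
    {K m : ℕ}
    (A : Fin K → Ω → Bool) (L : Fin K → Ω → 𝓛)
    (hA : ∀ k, Measurable (A k)) (hL : ∀ k, Measurable (L k))
    (Y : Ω → ℝ)
    (Ypot : (Fin K → Bool) → Ω → ℝ)
    (hYpm : ∀ a, Measurable (Ypot a)) (hYpi : ∀ a, Integrable (Ypot a) P)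
    (hpos1 : 0 < P (Etr A m true)) (hpos0 : 0 < P (Etr A m false))
    (hA1 : A1ok A Y Ypot) (hA2 : A2ok P A L Ypot) (hA3 : A3ok P A L)
    (ψ0 : ℝ) (ψ : Fin K → ℝ) (hMSM : MSMeq P Ypot ψ0 ψ)
    (hA5 : A5ok P A Ypot m) :
    θW P A m (Wsw P A L) Y - θW P A m (Wrsw P A L m) Y =
      ∑ j ∈ Finset.univ.filter (fun j : Fin K => m ≤ (j : ℕ)), ψ j * qcoef P A m j := by
  have hq : ∀ j ∈ univ.filter (fun j : Fin K => ¬ m ≤ (j : ℕ)), ψ j * qcoef P A m j = ψ j :=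
    fun j hj => by rw [qcoef_eq_one hpos1 (not_le.1 (mem_filter.1 hj).2), mul_one]
  rw [θW_Wsw_eq_sum_mul_qcoef hA hL hYpm hYpi hA1 hA2 hA3 hMSM hpos1 hpos0,
    θW_Wrsw_eq_sum_filter_lt hA hL hYpm hYpi hA1 hA2 hA3 hMSM hA5 hpos1 hpos0,
    ← sum_filter_add_sum_filter_not univ (fun j : Fin K => m ≤ (j : ℕ)), sum_congr rfl hq]
  simp only [not_le, add_sub_cancel_right]

/-- Theorem 3 of the paper: `θ_sw^(m) − θ_rsw^(m) = Σ_{j=m+1}^K ψ_j q_j`. -/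
theorem theorem3
    {Ω : Type*} [MeasurableSpace Ω] {𝓛 : Type*} [MeasurableSpace 𝓛]
    [Fintype 𝓛] [Nonempty 𝓛] [MeasurableSingletonClass 𝓛]
    (P : Measure Ω) [IsProbabilityMeasure P]
    {K m : ℕ} (hK : 1 ≤ K) (hm1 : 1 ≤ m) (hmK : m ≤ K)
    (A : Fin K → Ω → Bool) (L : Fin K → Ω → 𝓛)
    (hA : ∀ k, Measurable (A k)) (hL : ∀ k, Measurable (L k))
    (Y : Ω → ℝ) (hY : Measurable Y)
    (Ypot : (Fin K → Bool) → Ω → ℝ)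
    (hYpm : ∀ a, Measurable (Ypot a)) (hYpi : ∀ a, Integrable (Ypot a) P)
    (hpos1 : 0 < P (Etr A m true)) (hpos0 : 0 < P (Etr A m false))
    (hA1 : A1ok A Y Ypot) (hA2 : A2ok P A L Ypot) (hA3 : A3ok P A L)
    (ψ0 : ℝ) (ψ : Fin K → ℝ) (hMSM : MSMeq P Ypot ψ0 ψ)
    (hA5 : A5ok P A Ypot m) :
    θW P A m (Wsw P A L) Y - θW P A m (Wrsw P A L m) Y =
      ∑ j ∈ Finset.univ.filter (fun j : Fin K => m ≤ (j : ℕ)), ψ j * qcoef P A m j :=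
  theorem3_general P A L hA hL Y Ypot hYpm hYpi hpos1 hpos0 hA1 hA2 hA3 ψ0 ψ hMSM hA5

end MSMPaper
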